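/- arXiv:1308.5620 — 6 statements merged into one kernel-verified Lean document; each statement's English description precedes it below -/
import Mathlib

section
/- There exists an absolute constant c > 0 such that the following holds. Let f : ℝ → ℝ be a strictly convex function, and let A, C, D be finite nonempty subsets of ℝ with |C|·|D| ≥ |A|. Then |A + C| · |f(A) + D| ≥ c · |A|^{3/2} · (|C|·|D|)^{1/2}, where A + C = {a + c' : a ∈ A, c' ∈ C} and f(A) + D = {f(a) + d : a ∈ A, d ∈ D}. -/
open scoped Pointwise
open Finset

/-!
Pass to a half `P` of `A` on which `f` is monotone, and put `n = |P|`, `S = A + C`,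
`T = f(A) + D`. Cut `S` and `T` into runs of about `4|S|/n` and `4|T|/n` consecutive points.
Each translate `{(a + c, f a + d) : a ∈ P}` of the graph is a monotone path, so it meets at most
`3n/4` cells of the resulting grid, and by Cauchy–Schwarz it has at least `n/3` pairs of
distinct points in a common cell. By strict convexity two distinct points determine the
translate, so summing over `(c, d) ∈ C × D` counts distinct same-cell pairs of points of
`S × T`, of which there are at most `|S||T|` times the cell size `≈ 16|S||T|/n²`.
Hence `|C||D| n³ ≲ (|S||T|)²`.
-/

namespace Finset

theorem exists_two_mul_card_le_strictMonoOn_or_strictAntiOn {α β : Type*} [LinearOrder α]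
    [LinearOrder β] {f : α → β} (hf : ∀ ⦃x y z⦄, x < y → y < z → f y < max (f x) (f z))
    (s : Finset α) : ∃ t ⊆ s, #s ≤ 2 * #t ∧ (StrictMonoOn f t ∨ StrictAntiOn f t) := by
  classical
  set t₁ := {a ∈ s | ∀ b ∈ s, a < b → f a < f b}
  set t₂ := {a ∈ s | ¬ ∀ b ∈ s, a < b → f a < f b}
  have hmono : StrictMonoOn f t₁ := fun x hx y hy hxy =>
    (mem_filter.mp hx).2 y (mem_filter.mp hy).1 hxy
  -- each point of `t₂` is followed by a point where `f` is no larger, so `f` decreases on `t₂`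
  have hanti : StrictAntiOn f t₂ := by
    intro x _ y hy hxy
    obtain ⟨z, -, hyz, hfz⟩ : ∃ z ∈ s, y < z ∧ f z ≤ f y := by
      simpa using (mem_filter.mp hy).2
    exact (lt_max_iff.mp (hf hxy hyz)).resolve_right hfz.not_gt
  have hcard : #t₁ + #t₂ = #s := card_filter_add_card_filter_not _
  rcases le_total #t₁ #t₂ with h | h
  · exact ⟨t₂, filter_subset _ _, by omega, Or.inr hanti⟩
  · exact ⟨t₁, filter_subset _ _, by omega, Or.inl hmono⟩

theorem exists_monotone_blocks {α : Type*} [LinearOrder α] (s : Finset α) {q : ℕ}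
    (hq : 0 < q) :
    ∃ u : α → ℕ, Monotone u ∧ (∀ x ∈ s, u x ≤ (#s - 1) / q) ∧ ∀ b, #{x ∈ s | u x = b} ≤ q := by
  set rank : α → ℕ := fun x => #{y ∈ s | y < x}
  have rank_strictMonoOn : StrictMonoOn rank s := fun x hx y _ hxy =>
    card_lt_card <| (ssubset_iff_of_subset (monotone_filter_right s fun _ _ h => h.trans hxy)).mpr
      ⟨x, mem_filter.mpr ⟨hx, hxy⟩, by simp⟩
  refine ⟨fun x => rank x / q, fun x y hxy => Nat.div_le_div_right ?_, fun x hx => ?_, fun b => ?_⟩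
  · exact card_le_card (monotone_filter_right s fun _ _ h => h.trans_le hxy)
  · refine Nat.div_le_div_right ?_
    have : {y ∈ s | y < x} ⊆ s.erase x := fun y hy => by
      simp only [mem_filter] at hy
      exact mem_erase.mpr ⟨hy.2.ne, hy.1⟩
    simpa [card_erase_of_mem hx] using card_le_card this
  · calc #{x ∈ s | rank x / q = b} ≤ #(Ico (q * b) (q * b + q)) := by
          refine card_le_card_of_injOn rank (fun x hx => ?_) (rank_strictMonoOn.injOn.mono ?_)
          · have hb := (mem_filter.mp hx).2
            have h₁ := (Nat.le_div_iff_mul_le hq).mp hb.ge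
            have h₂ := (Nat.div_lt_iff_lt_mul hq).mp (hb.trans_lt b.lt_succ_self)
            simp only [coe_Ico, Set.mem_Ico]
            constructor <;> linarith
          · exact fun x hx => (mem_filter.mp hx).1
      _ = q := by simp

theorem card_image_prodMk_le_of_monotoneOn {α : Type*} [LinearOrder α] {s : Finset α}
    {p q : α → ℕ} {m n : ℕ} (hp : MonotoneOn p s) (hq : MonotoneOn q s)
    (hpm : ∀ a ∈ s, p a ≤ m) (hqn : ∀ a ∈ s, q a ≤ n) :
    #(s.image fun a => (p a, q a)) ≤ m + n + 1 := by
  -- on a monotone path in `ℕ × ℕ` the sum of the coordinates determines the point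
  have hinj : Set.InjOn (fun z : ℕ × ℕ => z.1 + z.2) (s.image fun a => (p a, q a)) := by
    simp only [Set.InjOn, coe_image, Set.forall_mem_image, Prod.mk.injEq]
    intro a ha b hb hsum
    rcases le_total a b with h | h
    · have := hp ha hb h; have := hq ha hb h; omega
    · have := hp hb ha h; have := hq hb ha h; omega
  calc #(s.image fun a => (p a, q a))
      = #((s.image fun a => (p a, q a)).image fun z => z.1 + z.2) :=
        (card_image_of_injOn hinj).symm
    _ ≤ #(range (m + n + 1)) := card_le_card fun k hk => by
      simp only [mem_image] at hk
      obtain ⟨_, ⟨a, ha, rfl⟩, rfl⟩ := hk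
      have := hpm a ha; have := hqn a ha
      simp only [mem_range]; omega
    _ = m + n + 1 := card_range _

theorem card_image_prodMk_le {α : Type*} [LinearOrder α] {s : Finset α}
    {p q : α → ℕ} {m n : ℕ} (hp : MonotoneOn p s) (hq : MonotoneOn q s ∨ AntitoneOn q s)
    (hpm : ∀ a ∈ s, p a ≤ m) (hqn : ∀ a ∈ s, q a ≤ n) :
    #(s.image fun a => (p a, q a)) ≤ m + n + 1 := by
  rcases hq with hq | hq
  · exact card_image_prodMk_le_of_monotoneOn hp hq hpm hqn
  have hreflect : Set.InjOn (fun z : ℕ × ℕ => (z.1, n - z.2)) (s.image fun a => (p a, q a)) := by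
    simp only [Set.InjOn, coe_image, Set.forall_mem_image, Prod.mk.injEq]
    intro a ha b hb h
    have := hqn a ha; have := hqn b hb; omega
  calc #(s.image fun a => (p a, q a))
      = #(s.image fun a => (p a, n - q a)) := by
        rw [← card_image_of_injOn hreflect, image_image]; rfl
    _ ≤ m + n + 1 := card_image_prodMk_le_of_monotoneOn hp
        (fun a ha b hb h => Nat.sub_le_sub_left (hq ha hb h) n) hpm fun _ _ => Nat.sub_le _ _

theorem card_filter_product_eq_sum {α β : Type*} (s : Finset α) (t : Finset β)
    (p : α → β → Prop) [∀ a b, Decidable (p a b)] :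
    #{z ∈ s ×ˢ t | p z.1 z.2} = ∑ a ∈ s, #{b ∈ t | p a b} := by
  simp only [card_filter, sum_product]

theorem sq_card_le_card_image_mul {α β : Type*} [DecidableEq β] (s : Finset α)
    (ψ : α → β) : #s ^ 2 ≤ #(s.image ψ) * #{z ∈ s ×ˢ s | ψ z.1 = ψ z.2} := by
  calc #s ^ 2 = (∑ b ∈ s.image ψ, #{a ∈ s | ψ a = b}) ^ 2 := by rw [← card_eq_sum_card_image]
    _ ≤ #(s.image ψ) * ∑ b ∈ s.image ψ, #{a ∈ s | ψ a = b} ^ 2 := sq_sum_le_card_mul_sum_sq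
    _ = #(s.image ψ) * #{z ∈ s ×ˢ s | ψ z.1 = ψ z.2} := by
      rw [card_filter_product_eq_sum s s fun x y => ψ x = ψ y]
      simp_rw [filter_congr fun y _ => eq_comm (a := ψ _) (b := ψ y),
        sum_comp (fun b => #{y ∈ s | ψ y = b}) ψ, smul_eq_mul, sq]

theorem card_filter_eq_le_card_add {α β : Type*} [DecidableEq α] [DecidableEq β] (s : Finset α)
    (ψ : α → β) :
    #{z ∈ s ×ˢ s | ψ z.1 = ψ z.2} ≤ #s + #{z ∈ s ×ˢ s | z.1 ≠ z.2 ∧ ψ z.1 = ψ z.2} := by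
  have hsplit : {z ∈ s ×ˢ s | ψ z.1 = ψ z.2} ⊆
      s.diag ∪ {z ∈ s ×ˢ s | z.1 ≠ z.2 ∧ ψ z.1 = ψ z.2} := by
    intro z hz
    by_cases h : z.1 = z.2 <;> simp_all
  exact (card_le_card hsplit).trans ((card_union_le _ _).trans_eq (by rw [diag_card]))

theorem card_filter_eq_le_card_mul {α β : Type*} [DecidableEq β] (s : Finset α)
    (κ : α → β) {m : ℕ} (hm : ∀ b, #{x ∈ s | κ x = b} ≤ m) :
    #{z ∈ s ×ˢ s | κ z.1 = κ z.2} ≤ #s * m := by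
  rw [card_filter_product_eq_sum s s fun x y => κ x = κ y]
  calc ∑ x ∈ s, #{y ∈ s | κ x = κ y} ≤ ∑ _x ∈ s, m :=
        sum_le_sum fun x _ => by rw [filter_congr fun y _ => eq_comm]; exact hm (κ x)
    _ = #s * m := by rw [sum_const, smul_eq_mul]

end Finset

namespace StrictConvexOn

variable {𝕜 : Type*} [Field 𝕜] [LinearOrder 𝕜] [IsStrictOrderedRing 𝕜] {s : Set 𝕜} {f : 𝕜 → 𝕜}

theorem lt_max_of_lt_of_lt (hf : StrictConvexOn 𝕜 s f) {x y z : 𝕜} (hx : x ∈ s)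
    (hz : z ∈ s) (hxy : x < y) (hyz : y < z) : f y < max (f x) (f z) := by
  have hmax : (z - y) * f x + (y - x) * f z ≤ (z - x) * max (f x) (f z) := by
    nlinarith [le_max_left (f x) (f z), le_max_right (f x) (f z)]
  exact lt_of_mul_lt_mul_left ((hf.secant_strict_mono_aux1 hx hz hxy hyz).trans_le hmax)
    (by linarith)

theorem strictMono_sub_comp_add (hf : StrictConvexOn 𝕜 Set.univ f) {h : 𝕜}
    (hh : 0 < h) : StrictMono fun x => f (x + h) - f x := by
  intro x x' hxx'
  have h₁ := hf.secant_strict_mono_aux2 (Set.mem_univ x) (Set.mem_univ (x' + h))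
    (lt_add_of_pos_right x hh) (by linarith)
  have h₂ := hf.secant_strict_mono_aux3 (Set.mem_univ x) (Set.mem_univ (x' + h)) hxx'
    (lt_add_of_pos_right x' hh)
  rw [add_sub_cancel_left] at h₁ h₂
  exact (div_lt_div_iff_of_pos_right hh).mp (h₁.trans h₂)

theorem injective_sub_comp_add (hf : StrictConvexOn 𝕜 Set.univ f) {h : 𝕜}
    (hh : h ≠ 0) : Function.Injective fun x => f (x + h) - f x := by
  rcases hh.lt_or_gt with hh | hh
  · intro x x' hxx'
    have key : f (x + h + -h) - f (x + h) = f (x' + h + -h) - f (x' + h) := by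
      simp only [add_neg_cancel_right] at hxx' ⊢
      linarith
    simpa using (hf.strictMono_sub_comp_add (neg_pos.mpr hh)).injective key
  · exact (hf.strictMono_sub_comp_add hh).injective

theorem injOn_translate_pairs (hf : StrictConvexOn 𝕜 Set.univ f) :
    Set.InjOn (fun z : (𝕜 × 𝕜) × 𝕜 × 𝕜 =>
        ((z.2.1 + z.1.1, f z.2.1 + z.1.2), (z.2.2 + z.1.1, f z.2.2 + z.1.2)))
      {z | z.2.1 ≠ z.2.2} := by
  rintro ⟨⟨c, d⟩, a, b⟩ hab ⟨⟨c', d'⟩, a', b'⟩ - h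
  simp only [Prod.mk.injEq] at h
  obtain ⟨⟨ha, hfa⟩, hb, hfb⟩ := h
  obtain rfl : c = c' := by
    by_contra hc
    refine hab (hf.injective_sub_comp_add (sub_ne_zero.mpr hc) ?_)
    have ha' : a' = a + (c - c') := by linarith
    have hb' : b' = b + (c - c') := by linarith
    simp only [← ha', ← hb']
    linarith
  obtain ⟨rfl, rfl⟩ : a = a' ∧ b = b' := ⟨by linarith, by linarith⟩
  obtain rfl : d = d' := by linarith
  rfl

theorem sum_card_pairs_le {β : Type*} [DecidableEq β]
    (hf : StrictConvexOn 𝕜 Set.univ f) {E : Finset (𝕜 × 𝕜)} {P : Finset 𝕜} {X : Finset (𝕜 × 𝕜)}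
    (κ : 𝕜 × 𝕜 → β) (hX : ∀ e ∈ E, ∀ a ∈ P, (a + e.1, f a + e.2) ∈ X) :
    ∑ e ∈ E, #{ab ∈ P ×ˢ P | ab.1 ≠ ab.2 ∧
        κ (ab.1 + e.1, f ab.1 + e.2) = κ (ab.2 + e.1, f ab.2 + e.2)} ≤
      #{z ∈ X ×ˢ X | κ z.1 = κ z.2} := by
  rw [← card_filter_product_eq_sum E (P ×ˢ P)
    fun e ab => ab.1 ≠ ab.2 ∧ κ (ab.1 + e.1, f ab.1 + e.2) = κ (ab.2 + e.1, f ab.2 + e.2)]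
  refine card_le_card_of_injOn _ ?_
    (hf.injOn_translate_pairs.mono fun z hz => (mem_filter.mp hz).2.1)
  intro z hz
  obtain ⟨hz, -, hcell⟩ := mem_filter.mp hz
  obtain ⟨he, hab⟩ := mem_product.mp hz
  exact mem_filter.mpr ⟨mem_product.mpr ⟨hX _ he _ (mem_product.mp hab).1,
    hX _ he _ (mem_product.mp hab).2⟩, hcell⟩

theorem card_mul_card_mul_sq_le (hf : StrictConvexOn 𝕜 Set.univ f)
    {P C D S T : Finset 𝕜} (hP : MonotoneOn f P ∨ AntitoneOn f P) (hS : P + C ⊆ S)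
    (hT : P.image f + D ⊆ T) {q₁ q₂ : ℕ} (hq₁ : 0 < q₁) (hq₂ : 0 < q₂) :
    #C * #D * #P ^ 2 ≤
      ((#S - 1) / q₁ + (#T - 1) / q₂ + 1) * (#C * #D * #P + #S * #T * (q₁ * q₂)) := by
  obtain ⟨u, hu, huS, hu_fiber⟩ := S.exists_monotone_blocks hq₁
  obtain ⟨v, hv, hvT, hv_fiber⟩ := T.exists_monotone_blocks hq₂
  set G := (#S - 1) / q₁ + (#T - 1) / q₂ + 1
  let cell : 𝕜 × 𝕜 → ℕ × ℕ := fun z => (u z.1, v z.2)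
  let pairs : 𝕜 × 𝕜 → Finset (𝕜 × 𝕜) := fun e =>
    {ab ∈ P ×ˢ P | ab.1 ≠ ab.2 ∧ cell (ab.1 + e.1, f ab.1 + e.2) = cell (ab.2 + e.1, f ab.2 + e.2)}
  have hX : ∀ e ∈ C ×ˢ D, ∀ a ∈ P, (a + e.1, f a + e.2) ∈ S ×ˢ T := fun e he a ha =>
    mem_product.mpr ⟨hS (add_mem_add ha (mem_product.mp he).1),
      hT (add_mem_add (mem_image_of_mem f ha) (mem_product.mp he).2)⟩
  have hcurve : ∀ e ∈ C ×ˢ D, #P ^ 2 ≤ G * (#P + #(pairs e)) := fun e he =>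
    calc #P ^ 2
        ≤ #(P.image fun a => cell (a + e.1, f a + e.2)) *
            #{ab ∈ P ×ˢ P | cell (ab.1 + e.1, f ab.1 + e.2) = cell (ab.2 + e.1, f ab.2 + e.2)} :=
          sq_card_le_card_image_mul _ _
      _ ≤ G * (#P + #(pairs e)) := by
          gcongr
          · exact card_image_prodMk_le (fun a _ b _ hab => hu (add_le_add_left hab _))
              (hP.imp (fun h a ha b hb hab => hv (add_le_add_left (h ha hb hab) _))
                fun h a ha b hb hab => hv (add_le_add_left (h ha hb hab) _))
              (fun a ha => huS _ (mem_product.mp (hX e he a ha)).1)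
              (fun a ha => hvT _ (mem_product.mp (hX e he a ha)).2)
          · exact card_filter_eq_le_card_add P fun a => cell (a + e.1, f a + e.2)
  have hcell_fiber : ∀ b, #{z ∈ S ×ˢ T | cell z = b} ≤ q₁ * q₂ := fun b => by
    simp only [cell, Prod.ext_iff]
    rw [filter_product (fun x => u x = b.1) (fun y => v y = b.2), card_product]
    exact Nat.mul_le_mul (hu_fiber _) (hv_fiber _)
  calc #C * #D * #P ^ 2 = ∑ _e ∈ C ×ˢ D, #P ^ 2 := by rw [sum_const, card_product, smul_eq_mul]
    _ ≤ ∑ e ∈ C ×ˢ D, G * (#P + #(pairs e)) := sum_le_sum hcurve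
    _ = G * (#C * #D * #P + ∑ e ∈ C ×ˢ D, #(pairs e)) := by
        rw [← mul_sum, sum_add_distrib, sum_const, card_product, smul_eq_mul]
    _ ≤ G * (#C * #D * #P + #S * #T * (q₁ * q₂)) := by
        gcongr
        calc _ ≤ _ := hf.sum_card_pairs_le cell hX
          _ ≤ #(S ×ˢ T) * (q₁ * q₂) := card_filter_eq_le_card_mul _ cell hcell_fiber
          _ = #S * #T * (q₁ * q₂) := by rw [card_product]

theorem card_mul_card_mul_pow_three_le (hf : StrictConvexOn 𝕜 Set.univ f)
    {P C D S T : Finset 𝕜} (hP : MonotoneOn f P ∨ AntitoneOn f P) (hS : P + C ⊆ S)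
    (hT : P.image f + D ⊆ T) (hPS : #P ≤ #S) (hPT : #P ≤ #T) (hP₂ : 2 ≤ #P) :
    #C * #D * #P ^ 3 ≤ 75 * (#S * #T) ^ 2 := by
  set n := #P
  have hn : 0 < n := by omega
  have run_count (m : ℕ) : 4 * ((m - 1) / (4 * m / n + 1)) < n := by
    refine Nat.lt_of_mul_lt_mul_right (a := 4 * m / n + 1) ?_
    calc 4 * ((m - 1) / (4 * m / n + 1)) * (4 * m / n + 1)
        = 4 * ((m - 1) / (4 * m / n + 1) * (4 * m / n + 1)) := by ring
      _ ≤ 4 * m := by have := Nat.div_mul_le_self (m - 1) (4 * m / n + 1); omega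
      _ < n * (4 * m / n + 1) := Nat.lt_mul_div_succ _ hn
  have run_size {m : ℕ} (hnm : n ≤ m) : (4 * m / n + 1) * n ≤ 5 * m := by
    have := Nat.div_mul_le_self (4 * m) n
    rw [add_mul, one_mul]; omega
  have key := hf.card_mul_card_mul_sq_le hP hS hT (4 * #S / n).succ_pos (4 * #T / n).succ_pos
  set G := (#S - 1) / (4 * #S / n + 1) + (#T - 1) / (4 * #T / n + 1) + 1
  set M := #S * #T * ((4 * #S / n + 1) * (4 * #T / n + 1))
  have hG : 4 * G ≤ 3 * n := by have := run_count #S; have := run_count #T; omega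
  have hM : #C * #D * n ≤ 3 * M := by
    have : 4 * (#C * #D * n ^ 2) ≤ 3 * n * (#C * #D * n + M) :=
      calc 4 * (#C * #D * n ^ 2) ≤ 4 * G * (#C * #D * n + M) :=
            (Nat.mul_le_mul_left 4 key).trans_eq (mul_assoc _ _ _).symm
        _ ≤ 3 * n * (#C * #D * n + M) := Nat.mul_le_mul_right _ hG
    refine Nat.le_of_mul_le_mul_right (c := n) ?_ hn
    nlinarith
  calc #C * #D * n ^ 3 = #C * #D * n * n ^ 2 := by ring
    _ ≤ 3 * M * n ^ 2 := Nat.mul_le_mul_right _ hM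
    _ = 3 * (#S * #T) * (((4 * #S / n + 1) * n) * ((4 * #T / n + 1) * n)) := by ring
    _ ≤ 3 * (#S * #T) * ((5 * #S) * (5 * #T)) :=
        Nat.mul_le_mul_left _ (Nat.mul_le_mul (run_size hPS) (run_size hPT))
    _ = 75 * (#S * #T) ^ 2 := by ring

theorem card_pow_three_mul_le (hf : StrictConvexOn 𝕜 Set.univ f) {A C D : Finset 𝕜}
    (hA : A.Nonempty) (hC : C.Nonempty) (hD : D.Nonempty) :
    #A ^ 3 * (#C * #D) ≤ 600 * (#(A + C) * #(A.image f + D)) ^ 2 := by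
  have hAS : #A ≤ #(A + C) := card_le_card_add_right hC
  by_cases hA₄ : #A < 4
  · have hA₃ : #A ^ 3 ≤ 9 * #A := by
      rw [pow_succ]
      exact Nat.mul_le_mul_right _ (Nat.pow_le_pow_left (by omega : #A ≤ 3) 2)
    have hT : 0 < #(A.image f + D) := card_pos.mpr ((hA.image f).add hD)
    calc #A ^ 3 * (#C * #D) ≤ 9 * (#A * #C * #D) :=
          (Nat.mul_le_mul_right _ hA₃).trans_eq (by ring)
      _ ≤ 9 * (#(A + C) * #(A + C) * (#(A.image f + D) * #(A.image f + D))) :=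
          Nat.mul_le_mul_left 9 <| Nat.mul_le_mul
            (Nat.mul_le_mul hAS (card_le_card_add_left hA))
            ((card_le_card_add_left (hA.image f)).trans (Nat.le_mul_of_pos_right _ hT))
      _ ≤ 600 * (#(A + C) * #(A.image f + D)) ^ 2 := by nlinarith
  obtain ⟨P, hPA, hAP, hP⟩ := A.exists_two_mul_card_le_strictMonoOn_or_strictAntiOn
    (fun _ _ _ hxy hyz => hf.lt_max_of_lt_of_lt trivial trivial hxy hyz)
  have hPT : #P ≤ #(A.image f + D) := calc
    #P = #(P.image f) := (card_image_of_injOn (hP.elim StrictMonoOn.injOn StrictAntiOn.injOn)).symm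
    _ ≤ #(A.image f) := card_le_card (image_subset_image hPA)
    _ ≤ #(A.image f + D) := card_le_card_add_right hD
  have key := hf.card_mul_card_mul_pow_three_le
    (hP.imp StrictMonoOn.monotoneOn StrictAntiOn.antitoneOn) (add_subset_add_right hPA)
    (add_subset_add_right (image_subset_image hPA)) ((card_le_card hPA).trans hAS) hPT (by omega)
  calc #A ^ 3 * (#C * #D) ≤ (2 * #P) ^ 3 * (#C * #D) :=
        Nat.mul_le_mul_right _ (Nat.pow_le_pow_left hAP 3)
    _ = 8 * (#C * #D * #P ^ 3) := by ring
    _ ≤ 600 * (#(A + C) * #(A.image f + D)) ^ 2 := by omega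

end StrictConvexOn

/-- (Elekes–Nathanson–Ruzsa) For a strictly convex function `f` and finite sets
`A, C, D ⊆ ℝ` with `|C||D| ≥ |A|`, one has
`|A + C| · |f(A) + D| = Ω(|A|^(3/2) (|C||D|)^(1/2))`. -/
theorem elekes_nathanson_ruzsa :
    ∃ c : ℝ, 0 < c ∧
      ∀ f : ℝ → ℝ,
        (∀ x y : ℝ, x ≠ y → ∀ t : ℝ, 0 < t → t < 1 →
          f (t * x + (1 - t) * y) < t * f x + (1 - t) * f y) →
      ∀ A C D : Finset ℝ, A.Nonempty → C.Nonempty → D.Nonempty →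
        (A.card : ℝ) ≤ (C.card : ℝ) * (D.card : ℝ) →
        c * (A.card : ℝ) ^ ((3 : ℝ) / 2) * ((C.card : ℝ) * (D.card : ℝ)) ^ ((1 : ℝ) / 2) ≤
          ((A + C).card : ℝ) * ((A.image f + D).card : ℝ) := by
  refine ⟨1 / 25, by norm_num, fun f hf A C D hA hC hD _ => ?_⟩
  have hf' : StrictConvexOn ℝ Set.univ f := ⟨convex_univ, fun x _ y _ hxy a b ha hb hab => by
    obtain rfl : b = 1 - a := by linarith
    simpa using hf x y hxy a ha (by linarith)⟩
  have key : ((#A : ℝ) ^ ((3 : ℝ) / 2) * ((#C : ℝ) * #D) ^ ((1 : ℝ) / 2)) ^ 2 ≤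
      (25 * (#(A + C) * #(A.image f + D) : ℝ)) ^ 2 := by
    rw [mul_pow, ← Real.rpow_natCast, ← Real.rpow_natCast (_ ^ _), ← Real.rpow_mul (by positivity),
      ← Real.rpow_mul (by positivity)]
    norm_num
    exact_mod_cast (hf'.card_pow_three_mul_le hA hC hD).trans (by nlinarith)
  have := (pow_le_pow_iff_left₀ (by positivity) (by positivity) two_ne_zero).mp key
  linarith
end

section
/- For p = (p_x,p_y) and q = (q_x,q_y) in ℝ², let γ_{pq} = {(x,y) ∈ ℝ² : (x − p_x)² + p_y² = (y − q_x)² + q_y²}. Suppose p, q, p', q' ∈ ℝ² satisfy p_y² ≠ q_y² and p'_y² ≠ q'_y², and suppose the triple (p_x, q_x, q_y² − p_y²) is not equal to the triple (p'_x, q'_x, q'^2_y − p'^2_y). Then the intersection γ_{pq} ∩ γ_{p'q'} contains at most 2 points. -/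
/-!
Write `γ_{pq}` as the hyperbola `(x - a)² - (y - b)² = c` with `c = q_y² - p_y² ≠ 0`.
Subtracting the equations of two such hyperbolas leaves a linear equation, so their
intersection lies on a line; the line is proper unless the centres agree, in which case the
intersection is empty. Substituting the line into the non-degenerate hyperbola gives a
quadratic equation which does not vanish identically, because a hyperbola with `c ≠ 0`
contains no line.
-/

lemma exists_subset_pair_of_quadratic {K : Type*} [Field K] {A B C : K}
    (h : ¬(A = 0 ∧ B = 0 ∧ C = 0)) :
    ∃ r s : K, {t | A * t ^ 2 + B * t + C = 0} ⊆ {r, s} := by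
  rcases Set.eq_empty_or_nonempty {t | A * t ^ 2 + B * t + C = 0} with hempty | ⟨r, hr⟩
  · exact ⟨0, 0, hempty.subset.trans (Set.empty_subset _)⟩
  refine ⟨r, -B / A - r, fun t ht => ?_⟩
  have hfactor : (t - r) * (A * (t + r) + B) = 0 := by
    simp only [Set.mem_ofPred_eq] at hr ht
    linear_combination ht - hr
  rcases mul_eq_zero.mp hfactor with hsub | hother
  · exact Or.inl (sub_eq_zero.mp hsub)
  · by_cases hA : A = 0
    · have hB : B = 0 := by simpa [hA] using hother
      exact absurd ⟨hA, hB, by simpa [hA, hB] using hr⟩ h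
    · right
      rw [Set.mem_singleton_iff]
      field_simp
      linear_combination hother

section Hyperbola

variable {K : Type*} [Field K]

def hyperbola (a b c : K) : Set (K × K) := {xy | (xy.1 - a) ^ 2 - (xy.2 - b) ^ 2 = c}

def line (α β δ : K) : Set (K × K) := {xy | α * xy.1 + β * xy.2 = δ}

lemma swap_preimage_hyperbola (a b c : K) :
    Prod.swap ⁻¹' hyperbola b a (-c) = hyperbola a b c := by
  ext xy
  simp only [hyperbola, Set.mem_preimage, Set.mem_ofPred_eq, Prod.fst_swap, Prod.snd_swap]
  constructor <;> intro h <;> linear_combination -h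

lemma swap_preimage_line (α β δ : K) : Prod.swap ⁻¹' line β α δ = line α β δ := by
  ext xy
  simp only [line, Set.mem_preimage, Set.mem_ofPred_eq, Prod.fst_swap, Prod.snd_swap]
  rw [add_comm]

lemma hyperbola_inter_hyperbola_subset_line (a b c a' b' c' : K) :
    hyperbola a b c ∩ hyperbola a' b' c' ⊆
      line (2 * (a' - a)) (2 * (b - b')) (a' ^ 2 - a ^ 2 - (b' ^ 2 - b ^ 2) + c - c') := by
  rintro xy ⟨h, h'⟩
  simp only [hyperbola, line, Set.mem_ofPred_eq] at h h' ⊢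
  linear_combination h - h'

variable [NeZero (2 : K)]

lemma exists_hyperbola_inter_line_subset_pair_of_left_ne_zero {a b c α β δ : K}
    (hc : c ≠ 0) (hα : α ≠ 0) : ∃ u v, hyperbola a b c ∩ line α β δ ⊆ {u, v} := by
  set m := δ - α * a
  have hquadratic : ¬(β ^ 2 - α ^ 2 = 0 ∧ 2 * (α ^ 2 * b - β * m) = 0 ∧
      m ^ 2 - α ^ 2 * b ^ 2 - α ^ 2 * c = 0) := by
    rintro ⟨hA, hB, hC⟩
    have hB' := (mul_eq_zero.mp hB).resolve_left two_ne_zero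
    have : α ^ 4 * c = 0 := by
      linear_combination -α ^ 2 * hC - m ^ 2 * hA - (β * m + α ^ 2 * b) * hB'
    exact hc (by simpa [hα] using this)
  obtain ⟨r, s, hrs⟩ := exists_subset_pair_of_quadratic hquadratic
  refine ⟨((δ - β * r) / α, r), ((δ - β * s) / α, s), ?_⟩
  rintro ⟨x, y⟩ ⟨hH, hL⟩
  simp only [hyperbola, line, Set.mem_ofPred_eq] at hH hL
  have hx : x = (δ - β * y) / α := by
    field_simp
    linear_combination hL
  have hy : y ∈ {t | (β ^ 2 - α ^ 2) * t ^ 2 + 2 * (α ^ 2 * b - β * m) * t +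
      (m ^ 2 - α ^ 2 * b ^ 2 - α ^ 2 * c) = 0} := by
    simp only [Set.mem_ofPred_eq, m]
    linear_combination α ^ 2 * hH - (α * x - 2 * α * a + δ - β * y) * hL
  rcases hrs hy with rfl | rfl <;> simp [hx]

lemma exists_hyperbola_inter_line_subset_pair {a b c α β δ : K}
    (hc : c ≠ 0) (hαβ : α ≠ 0 ∨ β ≠ 0) : ∃ u v, hyperbola a b c ∩ line α β δ ⊆ {u, v} := by
  rcases hαβ with hα | hβ
  · exact exists_hyperbola_inter_line_subset_pair_of_left_ne_zero hc hα
  obtain ⟨u, v, huv⟩ :=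
    exists_hyperbola_inter_line_subset_pair_of_left_ne_zero (a := b) (b := a) (δ := δ)
      (neg_ne_zero.mpr hc) hβ
  refine ⟨u.swap, v.swap, fun xy hxy => ?_⟩
  rw [← swap_preimage_hyperbola, ← swap_preimage_line] at hxy
  have hswap := huv hxy
  simp only [Set.mem_insert_iff, Set.mem_singleton_iff] at hswap ⊢
  rcases hswap with rfl | rfl <;> simp

lemma exists_hyperbola_inter_hyperbola_subset_pair {a b c a' b' c' : K}
    (hc : c ≠ 0) (hne : (a, b, c) ≠ (a', b', c')) :
    ∃ u v, hyperbola a b c ∩ hyperbola a' b' c' ⊆ {u, v} := by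
  by_cases hcentre : a = a' ∧ b = b'
  · obtain ⟨rfl, rfl⟩ := hcentre
    have hdisjoint : hyperbola a b c ∩ hyperbola a b c' = ∅ := by
      ext xy
      simp only [hyperbola, Set.mem_inter_iff, Set.mem_ofPred_eq, Set.mem_empty_iff_false,
        iff_false, not_and]
      rintro rfl rfl
      exact hne rfl
    exact ⟨0, 0, by simp [hdisjoint]⟩
  have hline : 2 * (a' - a) ≠ 0 ∨ 2 * (b - b') ≠ 0 := by
    by_contra! h
    simp only [mul_eq_zero, two_ne_zero, false_or, sub_eq_zero] at h
    exact hcentre ⟨h.1.symm, h.2⟩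
  obtain ⟨u, v, huv⟩ := exists_hyperbola_inter_line_subset_pair (δ :=
    a' ^ 2 - a ^ 2 - (b' ^ 2 - b ^ 2) + c - c') hc hline
  exact ⟨u, v, Set.subset_inter Set.inter_subset_left
    (hyperbola_inter_hyperbola_subset_line a b c a' b' c') |>.trans huv⟩

end Hyperbola

theorem hyperbolas_intersect_in_at_most_two_points_general (p q p' q' : ℝ × ℝ)
    (h1 : p.2 ^ 2 ≠ q.2 ^ 2)
    (h3 : (p.1, q.1, q.2 ^ 2 - p.2 ^ 2) ≠ (p'.1, q'.1, q'.2 ^ 2 - p'.2 ^ 2)) :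
    ∃ u v : ℝ × ℝ,
      {xy : ℝ × ℝ | (xy.1 - p.1) ^ 2 + p.2 ^ 2 = (xy.2 - q.1) ^ 2 + q.2 ^ 2} ∩
        {xy : ℝ × ℝ | (xy.1 - p'.1) ^ 2 + p'.2 ^ 2 = (xy.2 - q'.1) ^ 2 + q'.2 ^ 2} ⊆
      {u, v} := by
  have hγ : ∀ p q : ℝ × ℝ, {xy : ℝ × ℝ | (xy.1 - p.1) ^ 2 + p.2 ^ 2 =
      (xy.2 - q.1) ^ 2 + q.2 ^ 2} = hyperbola p.1 q.1 (q.2 ^ 2 - p.2 ^ 2) := by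
    intro p q
    ext xy
    simp only [hyperbola, Set.mem_ofPred_eq]
    constructor <;> intro h <;> linear_combination h
  rw [hγ p q, hγ p' q']
  exact exists_hyperbola_inter_hyperbola_subset_pair (sub_ne_zero.mpr h1.symm) h3

/-- Two distinct hyperbolas `γ_{pq}` (with distinct defining parameters) intersect in at
most two points. -/
theorem hyperbolas_intersect_in_at_most_two_points (p q p' q' : ℝ × ℝ)
    (h1 : p.2 ^ 2 ≠ q.2 ^ 2) (h2 : p'.2 ^ 2 ≠ q'.2 ^ 2)
    (h3 : (p.1, q.1, q.2 ^ 2 - p.2 ^ 2) ≠ (p'.1, q'.1, q'.2 ^ 2 - p'.2 ^ 2)) :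
    ∃ u v : ℝ × ℝ,
      {xy : ℝ × ℝ | (xy.1 - p.1) ^ 2 + p.2 ^ 2 = (xy.2 - q.1) ^ 2 + q.2 ^ 2} ∩
        {xy : ℝ × ℝ | (xy.1 - p'.1) ^ 2 + p'.2 ^ 2 = (xy.2 - q'.1) ^ 2 + q'.2 ^ 2} ⊆
      {u, v} :=
  hyperbolas_intersect_in_at_most_two_points_general p q p' q' h1 h3
end

section
/- There exists an absolute constant c > 0 such that for all finite sets A, B ⊂ ℝ with A and B nonempty, one has |A − A| · |{a² + b² : a ∈ A, b ∈ B}| ≥ c · |A|² · |B|^{1/2}, where A − A = {a − a' : a, a' ∈ A}. -/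
/-!
Replace `A` by its nonnegative part or by the negation of its negative part, whichever is larger:
this gives `P ⊆ [0, ∞)` with `|P| ≥ |A|/2`, `P - P ⊆ A - A` and `P² ⊆ A²`.
Sort `P` as `a₀ < ⋯ < a_K` and put `X = P - P`, `Y = P² + B²`.
For fixed `c ∈ P`, `b ∈ B²` the intervals `(aᵢ - c, aᵢ₊₁ - c]` are disjoint, and so are the
intervals `(aᵢ² + b, aᵢ₊₁² + b]`; by Markov's inequality, for at least half of the indices `i`
the first contains at most `4|X|/K` points of `X` and the second at most `4|Y|/K` points of `Y`.
A pair `x < x'` of points of `X` with at most `G` points of `X` in `(x, x']` is determined by `x`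
and that number, so there are at most `|X| G` such pairs. The triple `(c, b, i)` is recovered from
its two pairs of endpoints, because their differences `aᵢ₊₁ - aᵢ` and `aᵢ₊₁² - aᵢ²` determine
`aᵢ₊₁ + aᵢ`. Hence `K |P| |B²| / 2 ≤ 16 |X|² |Y|² / K²`.
-/

open Finset
open scoped Pointwise

section Order

variable {α : Type*} [LinearOrder α]

def countIoc (X : Finset α) (x y : α) : ℕ := #{t ∈ X | x < t ∧ t ≤ y}

lemma countIoc_strictMonoOn (X : Finset α) (x : α) :
    StrictMonoOn (countIoc X x) {y | y ∈ X ∧ x < y} := by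
  rintro y₁ - y₂ ⟨hy₂, hxy₂⟩ hlt
  refine card_lt_card ((ssubset_iff_of_subset fun t ht => ?_).2 ⟨y₂, ?_, ?_⟩)
  · simp only [mem_filter] at ht ⊢
    exact ⟨ht.1, ht.2.1, ht.2.2.trans hlt.le⟩
  · simp [hy₂, hxy₂]
  · simp [hlt]

def closePairs (X : Finset α) (G : ℕ) : Finset (α × α) :=
  {p ∈ X ×ˢ X | p.1 < p.2 ∧ countIoc X p.1 p.2 ≤ G}

lemma card_closePairs_le (X : Finset α) (G : ℕ) : #(closePairs X G) ≤ #X * G := by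
  calc #(closePairs X G) ≤ #(X ×ˢ Icc 1 G) := by
        refine card_le_card_of_injOn (fun p => (p.1, countIoc X p.1 p.2)) ?_ ?_
        · rintro ⟨x, y⟩ hp
          simp only [closePairs, coe_filter, mem_product] at hp
          obtain ⟨⟨hx, hy⟩, hxy, hG⟩ := hp
          simp only [coe_product, Set.mem_prod, mem_coe, mem_Icc]
          exact ⟨hx, card_pos.2 ⟨y, by simp [hy, hxy]⟩, hG⟩
        · rintro ⟨x, y⟩ hp ⟨x', y'⟩ hp' h
          simp only [Prod.mk.injEq] at h
          obtain ⟨rfl, h⟩ := h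
          simp only [closePairs, coe_filter, mem_product, Set.mem_ofPred_eq] at hp hp'
          rw [(countIoc_strictMonoOn X x).injOn ⟨hp.1.2, hp.2.1⟩ ⟨hp'.1.2, hp'.2.1⟩ h]
    _ = #X * G := by simp

def stepCount {K : ℕ} (X : Finset α) (u : Fin (K + 1) → α) (i : Fin K) : ℕ :=
  countIoc X (u i.castSucc) (u i.succ)

lemma sum_stepCount_le_card {K : ℕ} (X : Finset α) {u : Fin (K + 1) → α} (hu : Monotone u) :
    ∑ i, stepCount X u i ≤ #X := by
  simp only [stepCount, countIoc]
  rw [← card_biUnion]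
  · exact card_le_card (biUnion_subset.2 fun i _ => filter_subset _ _)
  · intro i _ j _ hij
    wlog h : i < j generalizing i j
    · exact (this (mem_coe.2 (mem_univ j)) (mem_coe.2 (mem_univ i)) hij.symm
        (lt_of_le_of_ne (not_lt.1 h) hij.symm)).symm
    rw [Function.onFun, disjoint_filter]
    intro t _ ht ht'
    exact (ht.2.trans (hu (Fin.succ_le_castSucc_iff.2 h))).not_gt ht'.1

end Order

lemma mul_card_filter_div_lt_le_card {ι : Type*} (s : Finset ι) (f : ι → ℕ) {N : ℕ}
    (hf : ∑ i ∈ s, f i ≤ N) (m : ℕ) : m * #{i ∈ s | m * N / #s < f i} ≤ #s := by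
  rcases s.eq_empty_or_nonempty with rfl | hs
  · simp
  set q := m * N / #s
  have hbad : #{i ∈ s | q < f i} * (q + 1) ≤ N := calc
    #{i ∈ s | q < f i} * (q + 1) ≤ ∑ i ∈ s with q < f i, f i := by
      simpa using card_nsmul_le_sum _ f (q + 1) fun i hi => (mem_filter.1 hi).2
    _ ≤ ∑ i ∈ s, f i := sum_le_sum_of_subset (filter_subset _ _)
    _ ≤ N := hf
  refine le_of_lt (lt_of_mul_lt_mul_right ?_ (Nat.zero_le (q + 1)))
  calc m * #{i ∈ s | q < f i} * (q + 1) = m * (#{i ∈ s | q < f i} * (q + 1)) := mul_assoc _ _ _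
    _ ≤ m * N := Nat.mul_le_mul_left m hbad
    _ < #s * (q + 1) := Nat.lt_mul_div_succ _ hs.card_pos

lemma card_le_two_mul_card_filter_le_and_le {ι : Type*} (s : Finset ι) (f g : ι → ℕ) {M N : ℕ}
    (hf : ∑ i ∈ s, f i ≤ M) (hg : ∑ i ∈ s, g i ≤ N) :
    #s ≤ 2 * #{i ∈ s | f i ≤ 4 * M / #s ∧ g i ≤ 4 * N / #s} := by
  classical
  have hf' := mul_card_filter_div_lt_le_card s f hf 4
  have hg' := mul_card_filter_div_lt_le_card s g hg 4
  have hcover : #s ≤ #{i ∈ s | f i ≤ 4 * M / #s ∧ g i ≤ 4 * N / #s} +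
      #{i ∈ s | 4 * M / #s < f i} + #{i ∈ s | 4 * N / #s < g i} := by
    refine (card_le_card fun i hi => ?_).trans
      ((card_union_le _ _).trans (Nat.add_le_add_right (card_union_le _ _) _))
    simp only [mem_union, mem_filter, hi, true_and]
    omega
  linarith

section OrderedField

variable {𝕜 : Type*} [Field 𝕜] [LinearOrder 𝕜] [IsStrictOrderedRing 𝕜]

lemma eq_of_sub_eq_of_sq_add_eq {s t c b s' t' c' b' : 𝕜} (hts : t ≠ s)
    (h₁ : t - c = t' - c') (h₂ : s - c = s' - c') (h₃ : t ^ 2 + b = t' ^ 2 + b')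
    (h₄ : s ^ 2 + b = s' ^ 2 + b') : t = t' ∧ c = c' ∧ b = b' := by
  have hdiff : s - t = s' - t' := by linear_combination h₂ - h₁
  have hsum : s + t = s' + t' := by
    refine mul_left_cancel₀ (sub_ne_zero.2 hts.symm) ?_
    linear_combination h₄ - h₃ - (s' + t') * hdiff
  have ht : t = t' := by linarith
  subst ht
  exact ⟨rfl, by linarith, by linarith⟩

variable {K : ℕ}

/-- The triple `(c, b, i)` is encoded by the pairs `(uᵢ - c, uᵢ₊₁ - c)` and
`(uᵢ² + b, uᵢ₊₁² + b)`. -/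
lemma card_sigma_stepCount_le {u : Fin (K + 1) → 𝕜} (hu : StrictMono u) (hu₀ : ∀ i, 0 ≤ u i)
    {C B X Y : Finset 𝕜} (hX : ∀ i, ∀ c ∈ C, u i - c ∈ X) (hY : ∀ i, ∀ b ∈ B, u i ^ 2 + b ∈ Y)
    (G₁ G₂ : ℕ) :
    #((C ×ˢ B).sigma fun cb =>
        {i | stepCount X (u · - cb.1) i ≤ G₁ ∧ stepCount Y (u · ^ 2 + cb.2) i ≤ G₂}) ≤
      #X * G₁ * (#Y * G₂) := by
  calc _ ≤ #(closePairs X G₁ ×ˢ closePairs Y G₂) := by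
        refine card_le_card_of_injOn (fun x =>
          ((u x.2.castSucc - x.1.1, u x.2.succ - x.1.1),
            (u x.2.castSucc ^ 2 + x.1.2, u x.2.succ ^ 2 + x.1.2))) ?_ ?_
        · rintro ⟨⟨c, b⟩, i⟩ h
          simp only [coe_sigma, Set.mem_sigma_iff, mem_coe, mem_product, mem_filter, mem_univ,
            true_and] at h
          obtain ⟨⟨hc, hb⟩, h₁, h₂⟩ := h
          have hlt : u i.castSucc < u i.succ := hu Fin.castSucc_lt_succ
          have hlt₂ : u i.castSucc ^ 2 < u i.succ ^ 2 := pow_lt_pow_left₀ hlt (hu₀ _) two_ne_zero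
          simp only [closePairs, coe_product, Set.mem_prod, mem_coe, mem_filter, mem_product]
          exact ⟨⟨⟨hX _ c hc, hX _ c hc⟩, by linarith, h₁⟩,
            ⟨⟨hY _ b hb, hY _ b hb⟩, by linarith, h₂⟩⟩
        · rintro ⟨⟨c, b⟩, i⟩ - ⟨⟨c', b'⟩, i'⟩ - h
          simp only [Prod.mk.injEq] at h
          obtain ⟨⟨h₁, h₂⟩, h₃, h₄⟩ := h
          obtain ⟨ht, rfl, rfl⟩ :=
            eq_of_sub_eq_of_sq_add_eq (hu.injective.ne Fin.castSucc_lt_succ.ne) h₁ h₂ h₃ h₄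
          obtain rfl : i = i' := Fin.castSucc_injective _ (hu.injective ht)
          rfl
    _ ≤ #X * G₁ * (#Y * G₂) := by
        rw [card_product]
        exact Nat.mul_le_mul (card_closePairs_le X G₁) (card_closePairs_le Y G₂)

theorem card_pow_three_mul_card_le {P : Finset 𝕜} (hP : ∀ p ∈ P, 0 ≤ p) (hK : #P = K + 1)
    (B : Finset 𝕜) :
    K ^ 3 * #P * #B ≤ 32 * #(P - P) ^ 2 * #(P.image (· ^ 2) + B) ^ 2 := by
  set u := P.orderEmbOfFin hK
  set X := P - P
  set Y := P.image (· ^ 2) + B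
  have hu₀ : ∀ i, 0 ≤ u i := fun i => hP _ (orderEmbOfFin_mem P hK i)
  have hX : ∀ i, ∀ c ∈ P, u i - c ∈ X := fun i c hc => sub_mem_sub (orderEmbOfFin_mem P hK i) hc
  have hY : ∀ i, ∀ b ∈ B, u i ^ 2 + b ∈ Y := fun i b hb =>
    add_mem_add (mem_image_of_mem _ (orderEmbOfFin_mem P hK i)) hb
  have hgood : ∀ cb ∈ P ×ˢ B, K ≤ 2 * #{i | stepCount X (u · - cb.1) i ≤ 4 * #X / K ∧
      stepCount Y (u · ^ 2 + cb.2) i ≤ 4 * #Y / K} := fun cb _ => by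
    have := card_le_two_mul_card_filter_le_and_le univ _ _
      (sum_stepCount_le_card X fun i j hij => sub_le_sub_right (u.monotone hij) cb.1)
      (sum_stepCount_le_card Y fun i j hij =>
        add_le_add_left (pow_le_pow_left₀ (hu₀ i) (u.monotone hij) 2) cb.2)
    rwa [card_univ, Fintype.card_fin] at this
  have hcount := card_sigma_stepCount_le u.strictMono hu₀ hX hY (4 * #X / K) (4 * #Y / K)
  rw [card_sigma] at hcount
  have hlower : K * (#P * #B) ≤ 2 * (#X * (4 * #X / K) * (#Y * (4 * #Y / K))) := by
    rw [← card_product, mul_comm, ← smul_eq_mul, ← sum_const]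
    refine (sum_le_sum hgood).trans ?_
    rw [← mul_sum]
    exact Nat.mul_le_mul_left 2 hcount
  calc K ^ 3 * #P * #B = K * K * (K * (#P * #B)) := by ring
    _ ≤ K * K * (2 * (#X * (4 * #X / K) * (#Y * (4 * #Y / K)))) := by gcongr
    _ = 2 * (K * (4 * #X / K)) * (K * (4 * #Y / K)) * (#X * #Y) := by ring
    _ ≤ 2 * (4 * #X) * (4 * #Y) * (#X * #Y) := Nat.mul_le_mul_right _ <|
        Nat.mul_le_mul (Nat.mul_le_mul_left 2 (Nat.mul_div_le _ K)) (Nat.mul_div_le _ K)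
    _ = 32 * #X ^ 2 * #Y ^ 2 := by ring

theorem card_pow_four_mul_card_le {P : Finset 𝕜} (hP : ∀ p ∈ P, 0 ≤ p) (hPne : P.Nonempty)
    (B : Finset 𝕜) :
    #P ^ 4 * #B ≤ 256 * (#(P - P) * #(P.image (· ^ 2) + B)) ^ 2 := by
  obtain ⟨K, hK⟩ : ∃ K, #P = K + 1 := Nat.exists_eq_succ_of_ne_zero hPne.card_pos.ne'
  rcases Nat.eq_zero_or_pos K with rfl | hK₀
  · have hPP : 1 ≤ #(P - P) := (hPne.sub hPne).card_pos
    have hBY : #B ≤ #(P - P) * #(P.image (· ^ 2) + B) :=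
      (card_le_card_add_left (hPne.image _)).trans (Nat.le_mul_of_pos_left _ hPP)
    rw [hK, zero_add, one_pow, one_mul]
    exact hBY.trans <|
      (Nat.le_self_pow two_ne_zero _).trans (Nat.le_mul_of_pos_left _ (by norm_num))
  calc #P ^ 4 * #B = (K + 1) ^ 3 * (#P * #B) := by rw [hK]; ring
    _ ≤ (2 * K) ^ 3 * (#P * #B) := by gcongr; omega
    _ = 8 * (K ^ 3 * #P * #B) := by ring
    _ ≤ 8 * (32 * #(P - P) ^ 2 * #(P.image (· ^ 2) + B) ^ 2) :=
        Nat.mul_le_mul_left 8 (card_pow_three_mul_card_le hP hK B)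
    _ = 256 * (#(P - P) * #(P.image (· ^ 2) + B)) ^ 2 := by ring

end OrderedField

lemma exists_large_nonneg_up_to_sign {R : Type*} [Ring R] [LinearOrder R] [IsOrderedRing R]
    (A : Finset R) :
    ∃ P : Finset R, (∀ p ∈ P, 0 ≤ p) ∧ #A ≤ 2 * #P ∧ P - P ⊆ A - A ∧
      P.image (· ^ 2) ⊆ A.image (· ^ 2) := by
  have hsplit : #{x ∈ A | 0 ≤ x} + #{x ∈ A | ¬ 0 ≤ x} = #A := card_filter_add_card_filter_not _
  by_cases h : #{x ∈ A | ¬ 0 ≤ x} ≤ #{x ∈ A | 0 ≤ x}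
  · exact ⟨{x ∈ A | 0 ≤ x}, fun p hp => (mem_filter.1 hp).2, by omega,
      sub_subset_sub (filter_subset _ _) (filter_subset _ _),
      image_subset_image (filter_subset _ _)⟩
  refine ⟨-{x ∈ A | ¬ 0 ≤ x}, fun p hp => ?_, by rw [card_neg]; omega, ?_, fun y hy => ?_⟩
  · exact (neg_lt_zero.1 (not_le.1 (mem_filter.1 (mem_neg'.1 hp)).2)).le
  · rw [neg_sub_neg]
    exact sub_subset_sub (filter_subset _ _) (filter_subset _ _)
  · obtain ⟨x, hx, rfl⟩ := mem_image.1 hy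
    exact mem_image.2 ⟨-x, (mem_filter.1 (mem_neg'.1 hx)).1, neg_sq x⟩

lemma image_add_image_eq_image_product {α β γ : Type*} [DecidableEq γ] [Add γ]
    (s : Finset α) (t : Finset β) (f : α → γ) (g : β → γ) :
    s.image f + t.image g = (s ×ˢ t).image fun p => f p.1 + g p.2 := by
  ext z
  simp only [mem_add, mem_image, mem_product, Prod.exists]
  aesop

lemma card_le_two_mul_card_image_sq {R : Type*} [CommRing R] [NoZeroDivisors R] [DecidableEq R]
    (B : Finset R) : #B ≤ 2 * #(B.image (· ^ 2)) := by
  refine card_le_mul_card_image B 2 fun y hy => ?_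
  obtain ⟨x, -, rfl⟩ := mem_image.1 hy
  refine (card_le_card fun b hb => ?_).trans (card_le_two (a := x) (b := -x))
  rcases sq_eq_sq_iff_eq_or_eq_neg.1 (mem_filter.1 hb).2 with rfl | rfl <;> simp

lemma mul_rpow_half_le_of_pow_four_mul_le {n m d s : ℕ} (h : n ^ 4 * m ≤ 8192 * (d * s) ^ 2) :
    1 / 100 * (n : ℝ) ^ 2 * (m : ℝ) ^ ((1 : ℝ) / 2) ≤ d * s := by
  rw [← Real.sqrt_eq_rpow]
  have hr : (n : ℝ) ^ 4 * m ≤ 8192 * ((d : ℝ) * s) ^ 2 := by exact_mod_cast h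
  refine (pow_le_pow_iff_left₀ (by positivity) (by positivity) two_ne_zero).1 ?_
  calc (1 / 100 * (n : ℝ) ^ 2 * √(m : ℝ)) ^ 2 = (n : ℝ) ^ 4 * m / 10000 := by
        rw [mul_pow, Real.sq_sqrt (Nat.cast_nonneg m)]; ring
    _ ≤ ((d : ℝ) * s) ^ 2 := by nlinarith [sq_nonneg ((d : ℝ) * s)]

/-- For finite nonempty sets `A, B ⊆ ℝ`,
`|A − A| · |{a² + b² : a ∈ A, b ∈ B}| = Ω(|A|² |B|^(1/2))`. -/
theorem difference_set_times_sum_of_squares :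
    ∃ c : ℝ, 0 < c ∧
      ∀ A B : Finset ℝ, A.Nonempty → B.Nonempty →
        c * (A.card : ℝ) ^ 2 * (B.card : ℝ) ^ ((1 : ℝ) / 2) ≤
          ((A - A).card : ℝ) *
            (((A ×ˢ B).image (fun ab => ab.1 ^ 2 + ab.2 ^ 2)).card : ℝ) := by
  refine ⟨1 / 100, by norm_num, fun A B hA _ => mul_rpow_half_le_of_pow_four_mul_le ?_⟩
  obtain ⟨P, hP₀, hAP, hPA, hPsq⟩ := exists_large_nonneg_up_to_sign A
  have hPne : P.Nonempty := card_pos.1 (by have := hA.card_pos; omega)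
  have hd : #(P - P) ≤ #(A - A) := card_le_card hPA
  have hs : #(P.image (· ^ 2) + B.image (· ^ 2)) ≤
      #((A ×ˢ B).image fun ab => ab.1 ^ 2 + ab.2 ^ 2) := card_le_card <|
    image_add_image_eq_image_product A B (· ^ 2) (· ^ 2) ▸ add_subset_add_right hPsq
  calc #A ^ 4 * #B ≤ (2 * #P) ^ 4 * (2 * #(B.image (· ^ 2))) := by
        gcongr
        exact card_le_two_mul_card_image_sq B
    _ = 32 * (#P ^ 4 * #(B.image (· ^ 2))) := by ring
    _ ≤ 32 * (256 * (#(P - P) * #(P.image (· ^ 2) + B.image (· ^ 2))) ^ 2) :=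
        Nat.mul_le_mul_left 32 (card_pow_four_mul_card_le hP₀ hPne _)
    _ = 8192 * (#(P - P) * #(P.image (· ^ 2) + B.image (· ^ 2))) ^ 2 := by ring
    _ ≤ 8192 * (#(A - A) * #((A ×ˢ B).image fun ab => ab.1 ^ 2 + ab.2 ^ 2)) ^ 2 := by
        gcongr
end

section
/- For p = (p_x,p_y), q = (q_x,q_y) ∈ ℝ², set A_{pq} = (p_x² + p_y² − q_x² − q_y²)/2 and define the complex curve γ_{pq} = {(a_x,a_y,b_x,b_y) ∈ ℂ⁴ : a_x p_x + a_y p_y = b_x q_x + b_y q_y + A_{pq}, a_x² + a_y² = 1, b_x² + b_y² = 1}. Suppose p, q, p', q' ∈ ℝ² are such that all eight coordinates p_x, p_y, q_x, q_y, p'_x, p'_y, q'_x, q'_y are nonzero, A_{pq} ≠ 0, A_{p'q'} ≠ 0, and (p,q) ≠ (p',q'). Then the intersection γ_{pq} ∩ γ_{p'q'} contains at most 4 points. -/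
/-- The complex curve `γ_{pq} ⊆ ℂ⁴` associated to a pair of planar points `p, q`. -/
def quadCurve (p q : ℝ × ℝ) : Set (ℂ × ℂ × ℂ × ℂ) :=
  {v : ℂ × ℂ × ℂ × ℂ |
    v.1 * (p.1 : ℂ) + v.2.1 * (p.2 : ℂ) =
      v.2.2.1 * (q.1 : ℂ) + v.2.2.2 * (q.2 : ℂ) +
        (((p.1 ^ 2 + p.2 ^ 2 - q.1 ^ 2 - q.2 ^ 2) / 2 : ℝ) : ℂ) ∧
    v.1 ^ 2 + v.2.1 ^ 2 = 1 ∧ v.2.2.1 ^ 2 + v.2.2.2 ^ 2 = 1}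

/-!
On the complex circle `x² + y² = 1` the coordinate `u = x + iy` determines the point, since
`1/u = x − iy`; substituting `x = (u + 1/u)/2`, `y = (u − 1/u)/(2i)` and clearing denominators turns
a line into a quadratic and a conic `(m₁x + m₂y + c₁)² + (m₃x + m₄y + c₂)² = k` into a quartic in
`u`, which is nonzero as soon as the linear part is nonzero and `c₁² + c₂² ≠ 0`.

A point `(a, b)` of `γ_{pq} ∩ γ_{p'q'}` satisfies two linear equations. If `q, q'` are independent
they give `b` as an affine function of `a` (Cramer), so `a` lies on the circle and on a conic; the
case of independent `p, p'` is the same after exchanging the roles of `a` and `b`, which maps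
`γ_{pq}` to `γ_{qp}`. If both pairs are dependent, eliminating `a` (resp. `b`) puts `b` (resp. `a`)
on a line, giving at most `2 · 2` points; the lines degenerate only when `(p', q') = μ (p, q)`, and
then `A_{p'q'} = μ² A_{pq}` together with `A_{p'q'} = μ A_{pq}` (from any common point) forces
`μ = 1`.
-/

open Complex Polynomial Set

lemma exists_subset_four_of_encard_le {α : Type*} [Nonempty α] {s : Set α} (h : s.encard ≤ 4) :
    ∃ a b c d : α, s ⊆ {a, b, c, d} := by
  obtain ⟨g, -, hg⟩ := (finite_of_encard_le_coe h).exists_injOn_of_encard_le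
    (t := (univ : Set (Fin 4))) (by simpa using h)
  refine ⟨Function.invFunOn g s 0, Function.invFunOn g s 1, Function.invFunOn g s 2,
    Function.invFunOn g s 3, fun x hx => ?_⟩
  rw [← hg.leftInvOn_invFunOn hx]
  generalize g x = i
  fin_cases i <;> simp

lemma eq_zero_of_sq_add_sq_eq_zero_of_mul_add_mul_eq_zero {R : Type*} [CommRing R]
    [NoZeroDivisors R] {a b c d : R} (hab : a ^ 2 + b ^ 2 = 0) (h : a * c + b * d = 0)
    (hcd : c ^ 2 + d ^ 2 ≠ 0) : a = 0 ∧ b = 0 := by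
  have ha : a ^ 2 * (c ^ 2 + d ^ 2) = 0 := by
    linear_combination (a * c - b * d) * h + d ^ 2 * hab
  have hb : b ^ 2 * (c ^ 2 + d ^ 2) = 0 := by
    linear_combination (b * d - a * c) * h + c ^ 2 * hab
  exact ⟨pow_eq_zero_iff two_ne_zero |>.1 ((mul_eq_zero.1 ha).resolve_right hcd),
    pow_eq_zero_iff two_ne_zero |>.1 ((mul_eq_zero.1 hb).resolve_right hcd)⟩

lemma ofReal_sq_add_ofReal_sq_ne_zero {x y : ℝ} (h : (x, y) ≠ 0) :
    (x : ℂ) ^ 2 + (y : ℂ) ^ 2 ≠ 0 := by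
  rw [← ofReal_pow, ← ofReal_pow, ← ofReal_add, ofReal_ne_zero, pow_two, pow_two]
  exact fun h' => h (Prod.ext (eq_zero_of_mul_self_add_mul_self_eq_zero h')
    (eq_zero_of_mul_self_add_mul_self_eq_zero ((add_comm _ _).trans h')))

lemma ofReal_prod_ne_zero {x y : ℝ} (h : (x, y) ≠ 0) : ((x : ℂ), (y : ℂ)) ≠ 0 := by
  simpa [Prod.ext_iff] using h

lemma eq_zero_of_sub_I_mul_eq_zero_of_add_I_mul_eq_zero {m n : ℂ} (h₁ : m - I * n = 0)
    (h₂ : m + I * n = 0) : m = 0 ∧ n = 0 :=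
  ⟨by linear_combination (h₁ + h₂) / 2,
    mul_left_cancel₀ I_ne_zero (by linear_combination (h₂ - h₁) / 2)⟩

lemma two_mul_add_I_mul_mul_eq {x y : ℂ} (h : x ^ 2 + y ^ 2 = 1) (m n : ℂ) :
    2 * (x + I * y) * (m * x + n * y) = (m - I * n) * (x + I * y) ^ 2 + (m + I * n) := by
  linear_combination (m + I * n) * h - ((m - I * n) * y ^ 2 - 2 * n * x * y) * I_sq

lemma injOn_add_I_mul :
    InjOn (fun v : ℂ × ℂ => v.1 + I * v.2) {v | v.1 ^ 2 + v.2 ^ 2 = 1} := by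
  rintro ⟨x, y⟩ (hv : x ^ 2 + y ^ 2 = 1) ⟨x', y'⟩ (hw : x' ^ 2 + y' ^ 2 = 1)
    (h : x + I * y = x' + I * y')
  have hconj : x - I * y = x' - I * y' := by
    have hu : (x + I * y) * (x - I * y) = 1 := by linear_combination hv - y ^ 2 * I_sq
    have hu' : (x + I * y) * (x' - I * y') = 1 := by
      rw [h]; linear_combination hw - y' ^ 2 * I_sq
    exact mul_left_cancel₀ (left_ne_zero_of_mul_eq_one hu) (hu.trans hu'.symm)
  exact Prod.ext (by linear_combination (h + hconj) / 2)
    (mul_left_cancel₀ I_ne_zero (by linear_combination (h - hconj) / 2))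

lemma encard_le_natDegree_of_eval_eq_zero {s : Set (ℂ × ℂ)}
    (hs : s ⊆ {v | v.1 ^ 2 + v.2 ^ 2 = 1}) {P : ℂ[X]} (hP : P ≠ 0)
    (hroot : ∀ v ∈ s, P.eval (v.1 + I * v.2) = 0) :
    s.encard ≤ P.natDegree :=
  calc s.encard ≤ (P.roots.toFinset : Set ℂ).encard :=
        encard_le_encard_of_injOn (fun v hv => by simpa [hP] using hroot v hv)
          (injOn_add_I_mul.mono hs)
    _ = P.roots.toFinset.card := encard_coe_eq_coe_finsetCard _
    _ ≤ P.natDegree := by exact_mod_cast P.roots.toFinset_card_le.trans P.card_roots'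

lemma encard_circle_inter_line_le_two {p₁ p₂ : ℂ} (hp : (p₁, p₂) ≠ 0) (c : ℂ) :
    {v : ℂ × ℂ | v.1 ^ 2 + v.2 ^ 2 = 1 ∧ v.1 * p₁ + v.2 * p₂ = c}.encard ≤ 2 := by
  set P : ℂ[X] := C (p₁ - I * p₂) * X ^ 2 - C (2 * c) * X + C (p₁ + I * p₂)
  have hP : P ≠ 0 := by
    intro h
    have hcoeff (n : ℕ) := congrArg (coeff · n) h
    simp only [P, coeff_add, coeff_sub, coeff_C_mul, coeff_X_pow, coeff_X, coeff_C, coeff_zero]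
      at hcoeff
    obtain ⟨rfl, rfl⟩ := eq_zero_of_sub_I_mul_eq_zero_of_add_I_mul_eq_zero
      (by simpa using hcoeff 2) (by simpa using hcoeff 0)
    exact hp rfl
  have hdeg : P.natDegree ≤ 2 := by simp only [P]; compute_degree
  calc _ ≤ (P.natDegree : ℕ∞) := by
        refine encard_le_natDegree_of_eval_eq_zero (fun v hv => hv.1) hP fun v ⟨hv, hline⟩ => ?_
        simp only [P, eval_add, eval_sub, eval_mul, eval_C, eval_X, eval_pow]
        linear_combination -two_mul_add_I_mul_mul_eq hv p₁ p₂ + 2 * (v.1 + I * v.2) * hline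
    _ ≤ 2 := by exact_mod_cast hdeg

lemma encard_circle_inter_conic_le_four {m₁ m₂ m₃ m₄ : ℂ}
    (hm : ¬(m₁ = 0 ∧ m₂ = 0 ∧ m₃ = 0 ∧ m₄ = 0)) {c₁ c₂ : ℂ} (hc : c₁ ^ 2 + c₂ ^ 2 ≠ 0) (k : ℂ) :
    {v : ℂ × ℂ | v.1 ^ 2 + v.2 ^ 2 = 1 ∧
      (m₁ * v.1 + m₂ * v.2 + c₁) ^ 2 + (m₃ * v.1 + m₄ * v.2 + c₂) ^ 2 = k}.encard ≤ 4 := by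
  set α₁ := m₁ - I * m₂
  set β₁ := m₁ + I * m₂
  set α₂ := m₃ - I * m₄
  set β₂ := m₃ + I * m₄
  set P : ℂ[X] := C (α₁ ^ 2 + α₂ ^ 2) * X ^ 4 + C (4 * (α₁ * c₁ + α₂ * c₂)) * X ^ 3 +
    C (4 * (c₁ ^ 2 + c₂ ^ 2 - k) + 2 * (α₁ * β₁ + α₂ * β₂)) * X ^ 2 +
    C (4 * (β₁ * c₁ + β₂ * c₂)) * X + C (β₁ ^ 2 + β₂ ^ 2)
  have hP : P ≠ 0 := by
    intro h
    have hcoeff (n : ℕ) := congrArg (coeff · n) h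
    simp only [P, coeff_add, coeff_C_mul, coeff_X_pow, coeff_X, coeff_C, coeff_zero] at hcoeff
    obtain ⟨hα₁, hα₂⟩ := eq_zero_of_sq_add_sq_eq_zero_of_mul_add_mul_eq_zero
      (by simpa using hcoeff 4) (by simpa using hcoeff 3) hc
    obtain ⟨hβ₁, hβ₂⟩ := eq_zero_of_sq_add_sq_eq_zero_of_mul_add_mul_eq_zero
      (by simpa using hcoeff 0) (by simpa using hcoeff 1) hc
    obtain ⟨rfl, rfl⟩ := eq_zero_of_sub_I_mul_eq_zero_of_add_I_mul_eq_zero hα₁ hβ₁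
    obtain ⟨rfl, rfl⟩ := eq_zero_of_sub_I_mul_eq_zero_of_add_I_mul_eq_zero hα₂ hβ₂
    exact hm ⟨rfl, rfl, rfl, rfl⟩
  have hdeg : P.natDegree ≤ 4 := by simp only [P]; compute_degree
  calc _ ≤ (P.natDegree : ℕ∞) := by
        refine encard_le_natDegree_of_eval_eq_zero (fun v hv => hv.1) hP
          fun ⟨x, y⟩ ⟨(hv : x ^ 2 + y ^ 2 = 1), hconic⟩ => ?_
        have h₁ := two_mul_add_I_mul_mul_eq hv m₁ m₂
        have h₂ := two_mul_add_I_mul_mul_eq hv m₃ m₄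
        simp only [P, α₁, β₁, α₂, β₂, eval_add, eval_mul, eval_C, eval_X, eval_pow]
        -- With `u = x + I * y`, `eval u P = (2 u L₁) ^ 2 + (2 u L₂) ^ 2 - 4 k u ^ 2` where `L₁, L₂`
        -- are the two affine forms of the conic.
        linear_combination 4 * (x + I * y) ^ 2 * hconic
          - ((m₁ - I * m₂) * (x + I * y) ^ 2 + 2 * c₁ * (x + I * y) + (m₁ + I * m₂)
            + 2 * (x + I * y) * (m₁ * x + m₂ * y + c₁)) * h₁
          - ((m₃ - I * m₄) * (x + I * y) ^ 2 + 2 * c₂ * (x + I * y) + (m₃ + I * m₄)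
            + 2 * (x + I * y) * (m₃ * x + m₄ * y + c₂)) * h₂
    _ ≤ 4 := by exact_mod_cast hdeg

noncomputable def quadConst (p q : ℝ × ℝ) : ℝ := (p.1 ^ 2 + p.2 ^ 2 - q.1 ^ 2 - q.2 ^ 2) / 2

lemma quadConst_comm (p q : ℝ × ℝ) : quadConst q p = -quadConst p q := by
  unfold quadConst; ring

lemma mem_quadCurve {p q : ℝ × ℝ} {a₁ a₂ b₁ b₂ : ℂ} :
    (a₁, a₂, b₁, b₂) ∈ quadCurve p q ↔
      a₁ * p.1 + a₂ * p.2 = b₁ * q.1 + b₂ * q.2 + quadConst p q ∧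
        a₁ ^ 2 + a₂ ^ 2 = 1 ∧ b₁ ^ 2 + b₂ ^ 2 = 1 :=
  Iff.rfl

lemma mem_quadCurve_comm {p q : ℝ × ℝ} {a₁ a₂ b₁ b₂ : ℂ} :
    (b₁, b₂, a₁, a₂) ∈ quadCurve q p ↔ (a₁, a₂, b₁, b₂) ∈ quadCurve p q := by
  simp only [mem_quadCurve, quadConst_comm q p, ofReal_neg]
  constructor <;> rintro ⟨h, hb, ha⟩ <;> exact ⟨by linear_combination -h, ha, hb⟩

lemma encard_quadCurve_inter_le_comm (p q p' q' : ℝ × ℝ) :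
    (quadCurve p q ∩ quadCurve p' q').encard ≤ (quadCurve q p ∩ quadCurve q' p').encard :=
  calc _ ≤ ((fun v : ℂ × ℂ × ℂ × ℂ => (v.2.2.1, v.2.2.2, v.1, v.2.1)) ''
          (quadCurve q p ∩ quadCurve q' p')).encard :=
        encard_le_encard fun ⟨a₁, a₂, b₁, b₂⟩ h =>
          ⟨(b₁, b₂, a₁, a₂), ⟨mem_quadCurve_comm.2 h.1, mem_quadCurve_comm.2 h.2⟩, rfl⟩
    _ ≤ _ := encard_image_le _ _

lemma det_mul_eq_of_mem_quadCurve_inter {p q p' q' : ℝ × ℝ} {a₁ a₂ b₁ b₂ : ℂ}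
    (h : (a₁, a₂, b₁, b₂) ∈ quadCurve p q ∩ quadCurve p' q') :
    ((q.1 * q'.2 - q.2 * q'.1 : ℝ) : ℂ) * b₁ =
        ((q'.2 * p.1 - q.2 * p'.1 : ℝ) : ℂ) * a₁ + ((q'.2 * p.2 - q.2 * p'.2 : ℝ) : ℂ) * a₂ +
          ((q.2 * quadConst p' q' - q'.2 * quadConst p q : ℝ) : ℂ) ∧
      ((q.1 * q'.2 - q.2 * q'.1 : ℝ) : ℂ) * b₂ =
        ((q.1 * p'.1 - q'.1 * p.1 : ℝ) : ℂ) * a₁ + ((q.1 * p'.2 - q'.1 * p.2 : ℝ) : ℂ) * a₂ +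
          ((q'.1 * quadConst p q - q.1 * quadConst p' q' : ℝ) : ℂ) := by
  rw [mem_inter_iff, mem_quadCurve, mem_quadCurve] at h
  obtain ⟨⟨h₁, -, -⟩, h₂, -, -⟩ := h
  push_cast
  exact ⟨by linear_combination (q.2 : ℂ) * h₂ - (q'.2 : ℂ) * h₁,
    by linear_combination (q'.1 : ℂ) * h₁ - (q.1 : ℂ) * h₂⟩

lemma encard_quadCurve_inter_le_four_of_det_ne_zero {p q p' q' : ℝ × ℝ} (hp : p ≠ 0)
    (hA : quadConst p q ≠ 0) (hq : q.1 * q'.2 - q.2 * q'.1 ≠ 0) :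
    (quadCurve p q ∩ quadCurve p' q').encard ≤ 4 := by
  set d := q.1 * q'.2 - q.2 * q'.1
  have hN : ¬(((q'.2 * p.1 - q.2 * p'.1 : ℝ) : ℂ) = 0 ∧ ((q'.2 * p.2 - q.2 * p'.2 : ℝ) : ℂ) = 0 ∧
      ((q.1 * p'.1 - q'.1 * p.1 : ℝ) : ℂ) = 0 ∧ ((q.1 * p'.2 - q'.1 * p.2 : ℝ) : ℂ) = 0) := by
    simp only [ofReal_eq_zero]
    rintro ⟨h₁, h₂, h₃, h₄⟩
    have hx : p.1 * d = 0 := by linear_combination q.1 * h₁ + q.2 * h₃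
    have hy : p.2 * d = 0 := by linear_combination q.1 * h₂ + q.2 * h₄
    exact hp (Prod.ext ((mul_eq_zero.1 hx).resolve_right hq)
      ((mul_eq_zero.1 hy).resolve_right hq))
  have he : (q.2 * quadConst p' q' - q'.2 * quadConst p q,
      q'.1 * quadConst p q - q.1 * quadConst p' q') ≠ 0 := by
    intro h
    rw [Prod.mk_eq_zero] at h
    exact mul_ne_zero hA hq (by linear_combination -q.1 * h.1 - q.2 * h.2)
  refine (encard_le_encard_of_injOn (t := {a : ℂ × ℂ | a.1 ^ 2 + a.2 ^ 2 = 1 ∧ _ = (d : ℂ) ^ 2})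
    (f := fun v => (v.1, v.2.1)) ?_ ?_).trans
    (encard_circle_inter_conic_le_four hN (ofReal_sq_add_ofReal_sq_ne_zero he) _)
  · rintro ⟨a₁, a₂, b₁, b₂⟩ h
    obtain ⟨hb₁, hb₂⟩ := det_mul_eq_of_mem_quadCurve_inter h
    obtain ⟨⟨-, ha, hb⟩, -⟩ := h
    refine ⟨ha, ?_⟩
    simp only [← hb₁, ← hb₂]
    linear_combination (d : ℂ) ^ 2 * hb
  · rintro ⟨a₁, a₂, b₁, b₂⟩ h ⟨a₁', a₂', b₁', b₂'⟩ h' ha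
    obtain ⟨rfl, rfl⟩ := Prod.mk.inj ha
    obtain ⟨hb₁, hb₂⟩ := det_mul_eq_of_mem_quadCurve_inter h
    obtain ⟨hb₁', hb₂'⟩ := det_mul_eq_of_mem_quadCurve_inter h'
    have hd : (d : ℂ) ≠ 0 := ofReal_ne_zero.2 hq
    rw [mul_left_cancel₀ hd (hb₁.trans hb₁'.symm), mul_left_cancel₀ hd (hb₂.trans hb₂'.symm)]

lemma mem_line_of_mem_quadCurve_inter {p q p' q' : ℝ × ℝ} (hp : p.1 * p'.2 - p.2 * p'.1 = 0)
    {a₁ a₂ b₁ b₂ : ℂ} (h : (a₁, a₂, b₁, b₂) ∈ quadCurve p q ∩ quadCurve p' q') :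
    b₁ * ((p.1 * q'.1 - p'.1 * q.1 : ℝ) : ℂ) + b₂ * ((p.1 * q'.2 - p'.1 * q.2 : ℝ) : ℂ) =
      ((p'.1 * quadConst p q - p.1 * quadConst p' q' : ℝ) : ℂ) := by
  rw [mem_inter_iff, mem_quadCurve, mem_quadCurve] at h
  obtain ⟨⟨h₁, -, -⟩, h₂, -, -⟩ := h
  have hpC : (p.1 : ℂ) * p'.2 - p.2 * p'.1 = 0 := by exact_mod_cast hp
  push_cast
  linear_combination (p'.1 : ℂ) * h₁ - (p.1 : ℂ) * h₂ + a₂ * hpC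

lemma line_coeff_ne_zero_of_mem_quadCurve_inter {p q p' q' : ℝ × ℝ} (hpx : p.1 ≠ 0)
    (hA' : quadConst p' q' ≠ 0) (hne : (p, q) ≠ (p', q')) (hp : p.1 * p'.2 - p.2 * p'.1 = 0)
    {v : ℂ × ℂ × ℂ × ℂ} (h : v ∈ quadCurve p q ∩ quadCurve p' q') :
    (p.1 * q'.1 - p'.1 * q.1, p.1 * q'.2 - p'.1 * q.2) ≠ 0 := by
  rw [Ne, Prod.mk_eq_zero]
  rintro ⟨hw₁, hw₂⟩
  have hE : p'.1 * quadConst p q - p.1 * quadConst p' q' = 0 := by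
    have hline := mem_line_of_mem_quadCurve_inter hp h
    rwa [hw₁, hw₂, ofReal_zero, mul_zero, mul_zero, add_zero, eq_comm, ofReal_eq_zero] at hline
  have hx : p'.1 = p.1 := by
    have : p.1 * quadConst p' q' * (p'.1 - p.1) = 0 := by
      unfold quadConst at hE ⊢
      linear_combination -p'.1 * hE - ((p.1 * p'.2 + p'.1 * p.2) * hp
        - (p.1 * q'.1 + p'.1 * q.1) * hw₁ - (p.1 * q'.2 + p'.1 * q.2) * hw₂) / 2
    exact sub_eq_zero.1 ((mul_eq_zero.1 this).resolve_left (mul_ne_zero hpx hA'))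
  rw [Ne, Prod.mk.injEq] at hne
  refine hne ⟨Prod.ext hx.symm (mul_left_cancel₀ hpx ?_),
    Prod.ext (mul_left_cancel₀ hpx ?_) (mul_left_cancel₀ hpx ?_)⟩
  · linear_combination -hp - p.2 * hx
  · linear_combination -hw₁ - q.1 * hx
  · linear_combination -hw₂ - q.2 * hx

lemma encard_quadCurve_inter_le_four_of_dets_eq_zero {p q p' q' : ℝ × ℝ} (hpx : p.1 ≠ 0)
    (hqx : q.1 ≠ 0) (hA' : quadConst p' q' ≠ 0) (hne : (p, q) ≠ (p', q'))
    (hp : p.1 * p'.2 - p.2 * p'.1 = 0) (hq : q.1 * q'.2 - q.2 * q'.1 = 0) :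
    (quadCurve p q ∩ quadCurve p' q').encard ≤ 4 := by
  rcases (quadCurve p q ∩ quadCurve p' q').eq_empty_or_nonempty with
    hS | ⟨⟨a₁, a₂, b₁, b₂⟩, hv⟩
  · simp [hS]
  have hv' : (b₁, b₂, a₁, a₂) ∈ quadCurve q p ∩ quadCurve q' p' :=
    ⟨mem_quadCurve_comm.2 hv.1, mem_quadCurve_comm.2 hv.2⟩
  have hne' : (q, p) ≠ (q', p') := fun h => hne (by rw [Prod.mk.injEq] at h ⊢; exact h.symm)
  have hwb := line_coeff_ne_zero_of_mem_quadCurve_inter hpx hA' hne hp hv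
  have hwa := line_coeff_ne_zero_of_mem_quadCurve_inter hqx
    (by rwa [quadConst_comm, neg_ne_zero]) hne' hq hv'
  set La := {a : ℂ × ℂ | a.1 ^ 2 + a.2 ^ 2 = 1 ∧
    a.1 * ((q.1 * p'.1 - q'.1 * p.1 : ℝ) : ℂ) + a.2 * ((q.1 * p'.2 - q'.1 * p.2 : ℝ) : ℂ) =
      ((q'.1 * quadConst q p - q.1 * quadConst q' p' : ℝ) : ℂ)}
  set Lb := {b : ℂ × ℂ | b.1 ^ 2 + b.2 ^ 2 = 1 ∧
    b.1 * ((p.1 * q'.1 - p'.1 * q.1 : ℝ) : ℂ) + b.2 * ((p.1 * q'.2 - p'.1 * q.2 : ℝ) : ℂ) =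
      ((p'.1 * quadConst p q - p.1 * quadConst p' q' : ℝ) : ℂ)}
  calc (quadCurve p q ∩ quadCurve p' q').encard
      ≤ ((fun x : (ℂ × ℂ) × (ℂ × ℂ) => (x.1.1, x.1.2, x.2.1, x.2.2)) '' La ×ˢ Lb).encard := by
        refine encard_le_encard fun ⟨a₁, a₂, b₁, b₂⟩ h =>
          ⟨((a₁, a₂), (b₁, b₂)), ⟨⟨h.1.2.1, ?_⟩, ⟨h.1.2.2, ?_⟩⟩, rfl⟩
        · exact mem_line_of_mem_quadCurve_inter hq
            ⟨mem_quadCurve_comm.2 h.1, mem_quadCurve_comm.2 h.2⟩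
        · exact mem_line_of_mem_quadCurve_inter hp h
    _ ≤ (La ×ˢ Lb).encard := encard_image_le _ _
    _ = La.encard * Lb.encard := encard_prod
    _ ≤ 2 * 2 := by
        gcongr
        exacts [encard_circle_inter_line_le_two (ofReal_prod_ne_zero hwa) _,
          encard_circle_inter_line_le_two (ofReal_prod_ne_zero hwb) _]
    _ = 4 := by norm_num

theorem quadCurves_intersect_in_at_most_four_points_general (p q p' q' : ℝ × ℝ)
    (hpx : p.1 ≠ 0) (hqx : q.1 ≠ 0)
    (hA : (p.1 ^ 2 + p.2 ^ 2 - q.1 ^ 2 - q.2 ^ 2) / 2 ≠ 0)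
    (hA' : (p'.1 ^ 2 + p'.2 ^ 2 - q'.1 ^ 2 - q'.2 ^ 2) / 2 ≠ 0)
    (hne : (p, q) ≠ (p', q')) :
    ∃ v₁ v₂ v₃ v₄ : ℂ × ℂ × ℂ × ℂ,
      quadCurve p q ∩ quadCurve p' q' ⊆ {v₁, v₂, v₃, v₄} := by
  apply exists_subset_four_of_encard_le
  by_cases hq : q.1 * q'.2 - q.2 * q'.1 = 0
  · by_cases hp : p.1 * p'.2 - p.2 * p'.1 = 0
    · exact encard_quadCurve_inter_le_four_of_dets_eq_zero hpx hqx hA' hne hp hq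
    · have hA_comm : quadConst q p ≠ 0 := by rwa [quadConst_comm, neg_ne_zero]
      exact (encard_quadCurve_inter_le_comm p q p' q').trans
        (encard_quadCurve_inter_le_four_of_det_ne_zero (fun h => hqx (by simp [h])) hA_comm hp)
  · exact encard_quadCurve_inter_le_four_of_det_ne_zero (fun h => hpx (by simp [h])) hA hq

/-- Two distinct curves `γ_{pq}` and `γ_{p'q'}` in `ℂ⁴` intersect in at most four points,
provided no coordinate vanishes and `A_{pq}, A_{p'q'} ≠ 0`. -/
theorem quadCurves_intersect_in_at_most_four_points (p q p' q' : ℝ × ℝ)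
    (hpx : p.1 ≠ 0) (hpy : p.2 ≠ 0) (hqx : q.1 ≠ 0) (hqy : q.2 ≠ 0)
    (hpx' : p'.1 ≠ 0) (hpy' : p'.2 ≠ 0) (hqx' : q'.1 ≠ 0) (hqy' : q'.2 ≠ 0)
    (hA : (p.1 ^ 2 + p.2 ^ 2 - q.1 ^ 2 - q.2 ^ 2) / 2 ≠ 0)
    (hA' : (p'.1 ^ 2 + p'.2 ^ 2 - q'.1 ^ 2 - q'.2 ^ 2) / 2 ≠ 0)
    (hne : (p, q) ≠ (p', q')) :
    ∃ v₁ v₂ v₃ v₄ : ℂ × ℂ × ℂ × ℂ,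
      quadCurve p q ∩ quadCurve p' q' ⊆ {v₁, v₂, v₃, v₄} :=
  quadCurves_intersect_in_at_most_four_points_general p q p' q' hpx hqx hA hA' hne
end

section
/- Let p, q, p', q' ∈ ℝ² be points all of whose coordinates p_x, p_y, q_x, q_y, p'_x, p'_y, q'_x, q'_y are nonzero, and suppose A_{pq} = (p_x² + p_y² − q_x² − q_y²)/2 ≠ 0 and A_{p'q'} = (p'^2_x + p'^2_y − q'^2_x − q'^2_y)/2 ≠ 0. If the four equations p_x p'_y = p_y p'_x, q_x q'_y = q_y q'_x, p_x q'_x = q_x p'_x, and p_x(p'^2_x + p'^2_y − q'^2_x − q'^2_y) = p'_x(p_x² + p_y² − q_x² − q_y²) all hold, then p = p' and q = q'. -/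
/-!
The first two equations make `p` proportional to `p'` and `q` to `q'`, and the third says the two
ratios agree, so `p = t • p'` and `q = t • q'` with `t ≠ 0`. The fourth equation is homogeneous of
degree one on the left and two on the right, so it becomes `t c = t² c` with
`c = p'_x (p'_x² + p'_y² − q'_x² − q'_y²) ≠ 0`, forcing `t = 1`.
-/

section Field

variable {K : Type*} [Field K]

theorem Prod.exists_eq_smul_of_mul_eq_mul {a b : K × K} (hb : b.1 ≠ 0)
    (h : a.1 * b.2 = a.2 * b.1) : ∃ t : K, a = t • b := by
  refine ⟨a.1 / b.1, Prod.ext ?_ ?_⟩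
  · simp [div_mul_cancel₀ _ hb]
  · simp only [Prod.smul_snd, smul_eq_mul]
    field_simp
    rw [h]

/-- `2 A_{pq}` in the notation of the paper. -/
def sqNormSub (p q : K × K) : K := p.1 ^ 2 + p.2 ^ 2 - q.1 ^ 2 - q.2 ^ 2

theorem sqNormSub_smul (t : K) (p q : K × K) :
    sqNormSub (t • p) (t • q) = t ^ 2 * sqNormSub p q := by
  simp only [sqNormSub, Prod.smul_fst, Prod.smul_snd, smul_eq_mul]
  ring

theorem eq_one_of_mul_eq_sq_mul {t c : K} (ht : t ≠ 0) (hc : c ≠ 0) (h : t * c = t ^ 2 * c) :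
    t = 1 := by
  have : t * c * 1 = t * c * t := by linear_combination h
  exact (mul_left_cancel₀ (mul_ne_zero ht hc) this).symm

end Field

theorem degenerate_case_forces_equal_pairs_general (p q p' q' : ℝ × ℝ)
    (hpx : p.1 ≠ 0)
    (hpx' : p'.1 ≠ 0) (hqx' : q'.1 ≠ 0)
    (hA' : (p'.1 ^ 2 + p'.2 ^ 2 - q'.1 ^ 2 - q'.2 ^ 2) / 2 ≠ 0)
    (e1 : p.1 * p'.2 = p.2 * p'.1)
    (e2 : q.1 * q'.2 = q.2 * q'.1)
    (e3 : p.1 * q'.1 = q.1 * p'.1)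
    (e4 : p.1 * (p'.1 ^ 2 + p'.2 ^ 2 - q'.1 ^ 2 - q'.2 ^ 2) =
            p'.1 * (p.1 ^ 2 + p.2 ^ 2 - q.1 ^ 2 - q.2 ^ 2)) :
    p = p' ∧ q = q' := by
  obtain ⟨t, rfl⟩ := Prod.exists_eq_smul_of_mul_eq_mul hpx' e1
  obtain ⟨s, rfl⟩ := Prod.exists_eq_smul_of_mul_eq_mul hqx' e2
  simp only [Prod.smul_fst, smul_eq_mul] at hpx e3
  obtain rfl : t = s :=
    mul_right_cancel₀ (mul_ne_zero hpx' hqx') (by linear_combination e3)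
  have e4' : t * p'.1 * sqNormSub p' q' = p'.1 * sqNormSub (t • p') (t • q') := e4
  rw [sqNormSub_smul] at e4'
  have hc : p'.1 * sqNormSub p' q' ≠ 0 := mul_ne_zero hpx' (div_ne_zero_iff.mp hA').1
  have ht : t = 1 :=
    eq_one_of_mul_eq_sq_mul (left_ne_zero_of_mul hpx) hc (by linear_combination e4')
  simp [ht]

/-- If the four degeneracy conditions of the matrices `M_{pp'}` and `M_{qq'}` hold and
no coordinate vanishes and `A_{pq}, A_{p'q'} ≠ 0`, then `p = p'` and `q = q'`. -/
theorem degenerate_case_forces_equal_pairs (p q p' q' : ℝ × ℝ)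
    (hpx : p.1 ≠ 0) (hpy : p.2 ≠ 0) (hqx : q.1 ≠ 0) (hqy : q.2 ≠ 0)
    (hpx' : p'.1 ≠ 0) (hpy' : p'.2 ≠ 0) (hqx' : q'.1 ≠ 0) (hqy' : q'.2 ≠ 0)
    (hA : (p.1 ^ 2 + p.2 ^ 2 - q.1 ^ 2 - q.2 ^ 2) / 2 ≠ 0)
    (hA' : (p'.1 ^ 2 + p'.2 ^ 2 - q'.1 ^ 2 - q'.2 ^ 2) / 2 ≠ 0)
    (e1 : p.1 * p'.2 = p.2 * p'.1)
    (e2 : q.1 * q'.2 = q.2 * q'.1)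
    (e3 : p.1 * q'.1 = q.1 * p'.1)
    (e4 : p.1 * (p'.1 ^ 2 + p'.2 ^ 2 - q'.1 ^ 2 - q'.2 ^ 2) =
            p'.1 * (p.1 ^ 2 + p.2 ^ 2 - q.1 ^ 2 - q.2 ^ 2)) :
    p = p' ∧ q = q' :=
  degenerate_case_forces_equal_pairs_general p q p' q' hpx hpx' hqx' hA' e1 e2 e3 e4
end

section
/- Let C = {(x,y) ∈ ℂ² : x² + y² = 1} be the complex unit circle, and let T : ℂ² → ℂ² be an affine map, i.e. T(v) = Mv + w for a linear map M : ℂ² → ℂ² and a vector w ∈ ℂ². If T(C) = C (the image of C under T equals C), then T(0,0) = (0,0). -/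
/-!
Write `T v = M v + w` and let `B` be the polar form of `Q (x, y) = x² + y²`, so `C = {Q = 1}`.
Since `C = -C`, for `u ∈ C` both `T u = M u + w` and `T (-u) = -M u + w` lie on `C`, and subtracting
the two equations gives `B (M u) w = 0`. Every `p ∈ C` is `T u` for some `u ∈ C`, so `B p w = B w w`
is constant on `C`, hence zero because `C = -C`. Testing against `(1, 0), (0, 1) ∈ C` gives `w = 0`.
-/

namespace QuadraticMap

variable {K V : Type*} [Field K] [NeZero (2 : K)] [AddCommGroup V] [Module K V]
  {Q : QuadraticForm K V} {f : V →ₗ[K] V} {w : V}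

theorem polar_apply_eq_zero_of_mapsTo
    (hf : Set.MapsTo (fun v => f v + w) {v | Q v = 1} {v | Q v = 1}) {u : V} (hu : Q u = 1) :
    polar Q (f u) w = 0 := by
  have hpos : Q (f u + w) = 1 := hf hu
  have hneg : Q (-f u + w) = 1 := by
    simpa using hf (show Q (-u) = 1 by rwa [QuadraticMap.map_neg])
  rw [QuadraticMap.map_add Q] at hpos hneg
  rw [polar_neg_left, QuadraticMap.map_neg] at hneg
  have : (2 : K) * polar Q (f u) w = 0 := by linear_combination hpos - hneg
  exact (mul_eq_zero.mp this).resolve_left two_ne_zero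

theorem polar_apply_eq_zero_of_image_eq
    (h : (fun v => f v + w) '' {v | Q v = 1} = {v | Q v = 1}) {p : V} (hp : Q p = 1) :
    polar Q p w = 0 := by
  have hconst : ∀ q, Q q = 1 → polar Q q w = polar Q w w := by
    intro q hq
    obtain ⟨u, hu, rfl⟩ := h.ge hq
    rw [polar_add_left, polar_apply_eq_zero_of_mapsTo ((Set.mapsTo_image _ _).mono_right h.le) hu,
      zero_add]
  have hneg := hconst (-p) (by rwa [QuadraticMap.map_neg])
  rw [polar_neg_left, ← hconst p hp] at hneg
  have : (2 : K) * polar Q p w = 0 := by linear_combination -hneg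
  exact (mul_eq_zero.mp this).resolve_left two_ne_zero

end QuadraticMap

open QuadraticMap in
/-- An affine map of `ℂ²` whose image of the complex unit circle `{x² + y² = 1}` is
again the complex unit circle must fix the origin. -/
theorem affine_map_preserving_complex_circle_fixes_origin
    (M : (ℂ × ℂ) →ₗ[ℂ] (ℂ × ℂ)) (w : ℂ × ℂ)
    (h : (fun v : ℂ × ℂ => M v + w) '' {v : ℂ × ℂ | v.1 ^ 2 + v.2 ^ 2 = 1} =
          {v : ℂ × ℂ | v.1 ^ 2 + v.2 ^ 2 = 1}) :
    M (0, 0) + w = (0, 0) := by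
  set Q : QuadraticForm ℂ (ℂ × ℂ) := sq.prod sq
  have hQ : {v : ℂ × ℂ | v.1 ^ 2 + v.2 ^ 2 = 1} = {v | Q v = 1} := by
    simp [Q, pow_two]
  rw [hQ] at h
  have h₁ := polar_apply_eq_zero_of_image_eq h (p := (1, 0)) (by simp [Q])
  have h₂ := polar_apply_eq_zero_of_image_eq h (p := (0, 1)) (by simp [Q])
  simp only [polar, prod_apply, sq_apply, Prod.fst_add, Prod.snd_add, Q] at h₁ h₂
  rw [Prod.mk_zero_zero, map_zero, zero_add, Prod.ext_iff, Prod.fst_zero, Prod.snd_zero]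
  constructor
  · linear_combination h₁ / 2
  · linear_combination h₂ / 2
end
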